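/- arXiv:2205.09561 — 5 statements merged into one kernel-verified Lean document; each statement's English description precedes it below -/
import Mathlib

section
/- Let X be a real normed vector space and g : X → ℝ ∪ {−∞, +∞} be sublinear. Then g is lower semicontinuous at 0 if and only if there exists L > 0 such that g(x) ≥ −L‖x‖ for all x ∈ X. -/
/-- A sublinear function `g : X → EReal` on a real normed space is
lower semicontinuous at `0` iff there is `L > 0` with `g x ≥ −L‖x‖` for all `x`. -/
theorem stmt3 {X : Type*} [NormedAddCommGroup X] [NormedSpace ℝ X] (g : X → EReal)
    (hpos : ∀ t : ℝ, 0 < t → ∀ x : X, g (t • x) = (t : EReal) * g x)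
    (hsub : ∀ x x' : X, g x < ⊤ → g x' < ⊤ → g (x + x') ≤ g x + g x')
    (h0 : g 0 = 0) :
    LowerSemicontinuousAt g 0 ↔ ∃ L : ℝ, 0 < L ∧ ∀ x : X, ((-(L * ‖x‖) : ℝ) : EReal) ≤ g x := by
  constructor
  · intro hlsc
    have h1 : ((-1 : ℝ) : EReal) < g 0 := by rw [h0]; exact_mod_cast (by norm_num : (-1:ℝ) < 0)
    obtain ⟨δ, hδ, hball⟩ := Metric.eventually_nhds_iff_ball.mp (hlsc _ h1)
    refine ⟨2 / δ, by positivity, fun x => ?_⟩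
    rcases eq_or_ne x 0 with rfl | hx
    · simp [h0]
    · have hxn : (0:ℝ) < ‖x‖ := norm_pos_iff.mpr hx
      set t : ℝ := δ / (2 * ‖x‖) with ht
      have htpos : 0 < t := by positivity
      have hmem : t • x ∈ Metric.ball (0 : X) δ := by
        have heq : t * ‖x‖ = δ / 2 := by rw [ht]; field_simp
        simp only [Metric.mem_ball, dist_zero_right, norm_smul, Real.norm_eq_abs,
          abs_of_pos htpos, heq]
        linarith
      have hgt : ((-1 : ℝ) : EReal) < (t : EReal) * g x := by
        rw [← hpos t htpos x]; exact hball _ hmem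
      -- now deduce
      have key : -(2/δ * ‖x‖) = (-1) / t := by
        rw [ht]; field_simp
      rw [key]
      cases hgx : g x with
      | bot =>
        exfalso
        rw [hgx] at hgt
        rw [EReal.mul_bot_of_pos (by exact_mod_cast htpos)] at hgt
        exact absurd hgt (not_lt_bot)
      | top => exact le_top
      | coe r =>
        rw [hgx] at hgt
        have : (-1 : ℝ) < t * r := by exact_mod_cast hgt
        have : (-1)/t < r := by rw [div_lt_iff₀ htpos]; linarith [mul_comm t r]
        exact_mod_cast this.le
  · rintro ⟨L, hL, hbound⟩
    intro y hy
    rw [h0] at hy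
    rw [Metric.eventually_nhds_iff_ball]
    cases hy' : y with
    | top => exfalso; rw [hy'] at hy; exact absurd hy (by simp)
    | bot =>
      exact ⟨1, one_pos, fun x _ => lt_of_lt_of_le (EReal.bot_lt_coe _) (hbound x)⟩
    | coe r =>
      rw [hy'] at hy
      have hr : r < 0 := by exact_mod_cast hy
      refine ⟨-r / L, div_pos (by linarith) hL, fun x hx => ?_⟩
      refine lt_of_lt_of_le ?_ (hbound x)
      have hxn : ‖x‖ < -r / L := by simpa [dist_zero_right] using hx
      have : r < -(L * ‖x‖) := by
        have := (lt_div_iff₀ hL).mp hxn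
        nlinarith
      exact_mod_cast this
end

section
/- Let X be a real normed vector space and g : X → ℝ ∪ {+∞} be a proper sublinear function. Assume x ∈ dom g and δ, L > 0 are such that |g(x') − g(x'')| ≤ L‖x' − x''‖ for all x', x'' ∈ B(x, δ) ∩ dom g, where B(x, δ) := {x' ∈ X : ‖x' − x‖ < δ}. Then for every γ > 0 and all x', x'' ∈ B(γx, γδ) ∩ dom g one has |g(x') − g(x'')| ≤ L‖x' − x''‖. In particular, if ‖x‖ < δ then the restriction of g to dom g is L-Lipschitz. -/
/-- Let `g : X → ℝ ∪ {+∞}` (encoded as an `EReal`-valued function never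
taking the value `−∞`) be a proper sublinear function on a real normed space. If `g` is
`L`-Lipschitz on `B(x, δ) ∩ dom g` for some `x ∈ dom g` and `δ, L > 0`, then for every
`γ > 0`, `g` is `L`-Lipschitz on `B(γx, γδ) ∩ dom g`; in particular, if `‖x‖ < δ` then
the restriction of `g` to `dom g` is `L`-Lipschitz. -/
theorem stmt5 {X : Type*} [NormedAddCommGroup X] [NormedSpace ℝ X] (g : X → EReal)
    (hpos : ∀ t : ℝ, 0 < t → ∀ x : X, g (t • x) = (t : EReal) * g x)
    (hsub : ∀ x x' : X, g x < ⊤ → g x' < ⊤ → g (x + x') ≤ g x + g x')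
    (h0 : g 0 = 0)
    (hproper : (∀ x : X, g x ≠ ⊥) ∧ ∃ x : X, g x ≠ ⊤)
    (x : X) (hx : g x < ⊤) (δ L : ℝ) (hδ : 0 < δ) (hL : 0 < L)
    (hLip : ∀ x' x'' : X, x' ∈ Metric.ball x δ → g x' < ⊤ →
      x'' ∈ Metric.ball x δ → g x'' < ⊤ →
      |(g x').toReal - (g x'').toReal| ≤ L * ‖x' - x''‖) :
    (∀ γ : ℝ, 0 < γ → ∀ x' x'' : X, x' ∈ Metric.ball (γ • x) (γ * δ) → g x' < ⊤ →
      x'' ∈ Metric.ball (γ • x) (γ * δ) → g x'' < ⊤ →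
      |(g x').toReal - (g x'').toReal| ≤ L * ‖x' - x''‖) ∧
    (‖x‖ < δ → ∀ x' x'' : X, g x' < ⊤ → g x'' < ⊤ →
      |(g x').toReal - (g x'').toReal| ≤ L * ‖x' - x''‖) := by
  -- key: scaling
  have key : ∀ γ : ℝ, 0 < γ → ∀ x' x'' : X, x' ∈ Metric.ball (γ • x) (γ * δ) → g x' < ⊤ →
      x'' ∈ Metric.ball (γ • x) (γ * δ) → g x'' < ⊤ →
      |(g x').toReal - (g x'').toReal| ≤ L * ‖x' - x''‖ := by
    intro γ hγ x' x'' hb' hf' hb'' hf''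
    have hγi : 0 < γ⁻¹ := inv_pos.mpr hγ
    have hscale : ∀ y : X, g y < ⊤ → (g (γ⁻¹ • y)).toReal = γ⁻¹ * (g y).toReal ∧
        g (γ⁻¹ • y) < ⊤ := by
      intro y hy
      have hne : g y = ((g y).toReal : EReal) := (EReal.coe_toReal hy.ne (hproper.1 y)).symm
      have := hpos γ⁻¹ hγi y
      rw [hne] at this
      rw [this, ← EReal.coe_mul]
      exact ⟨EReal.toReal_coe _, EReal.coe_lt_top _⟩
    have hball : ∀ y : X, y ∈ Metric.ball (γ • x) (γ * δ) → γ⁻¹ • y ∈ Metric.ball x δ := by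
      intro y hy
      rw [Metric.mem_ball, dist_eq_norm] at hy ⊢
      have : γ⁻¹ • y - x = γ⁻¹ • (y - γ • x) := by
        rw [smul_sub, smul_smul, inv_mul_cancel₀ hγ.ne', one_smul]
      rw [this, norm_smul, Real.norm_eq_abs, abs_of_pos hγi]
      calc γ⁻¹ * ‖y - γ • x‖ < γ⁻¹ * (γ * δ) := by
            exact mul_lt_mul_of_pos_left hy hγi
        _ = δ := by field_simp
    obtain ⟨ht', hf1⟩ := hscale x' hf'
    obtain ⟨ht'', hf2⟩ := hscale x'' hf''
    have h := hLip (γ⁻¹ • x') (γ⁻¹ • x'') (hball _ hb') hf1 (hball _ hb'') hf2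
    rw [ht', ht''] at h
    have hnorm : ‖γ⁻¹ • x' - γ⁻¹ • x''‖ = γ⁻¹ * ‖x' - x''‖ := by
      rw [← smul_sub, norm_smul, Real.norm_eq_abs, abs_of_pos hγi]
    rw [hnorm, ← mul_sub, abs_mul, abs_of_pos hγi] at h
    calc |(g x').toReal - (g x'').toReal|
        = γ * (γ⁻¹ * |(g x').toReal - (g x'').toReal|) := by field_simp
      _ ≤ γ * (L * (γ⁻¹ * ‖x' - x''‖)) := by
          exact mul_le_mul_of_nonneg_left h hγ.le
      _ = L * ‖x' - x''‖ := by field_simp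
  refine ⟨key, ?_⟩
  intro hxδ x' x'' hf' hf''
  set γ : ℝ := (‖x'‖ + ‖x''‖ + 1) / (δ - ‖x‖) with hγdef
  have hd : 0 < δ - ‖x‖ := by linarith
  have hγ : 0 < γ := div_pos (by positivity) hd
  have hmem : ∀ y : X, ‖y‖ ≤ ‖x'‖ + ‖x''‖ → y ∈ Metric.ball (γ • x) (γ * δ) := by
    intro y hy
    rw [Metric.mem_ball, dist_eq_norm]
    have h1 : ‖y - γ • x‖ ≤ ‖y‖ + γ * ‖x‖ := by
      calc ‖y - γ • x‖ ≤ ‖y‖ + ‖γ • x‖ := norm_sub_le _ _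
        _ = ‖y‖ + γ * ‖x‖ := by rw [norm_smul, Real.norm_eq_abs, abs_of_pos hγ]
    have h2 : ‖y‖ + γ * ‖x‖ < γ * δ := by
      have : γ * (δ - ‖x‖) = ‖x'‖ + ‖x''‖ + 1 := by
        rw [hγdef, div_mul_cancel₀ _ hd.ne']
      nlinarith
    linarith
  exact key γ hγ x' x'' (hmem x' (by linarith [norm_nonneg x''])) hf'
    (hmem x'' (by linarith [norm_nonneg x'])) hf''
end

section
/- Let X, Y be real normed spaces, A : X → Y a continuous linear operator with adjoint A* : Y* → X*, P ⊆ X and Q ⊆ Y convex cones, c* ∈ X*, and let v : Y → ℝ ∪ {−∞, +∞} be the value function v(y) := inf{⟨x, c*⟩ : x ∈ P, y ∈ Ax − Q} (with inf ∅ := +∞). Then for every y* ∈ Y*, the conjugate satisfies v*(y*) = 0 if y* ∈ Q⁺ and c* − A*y* ∈ P⁺, and v*(y*) = +∞ otherwise; hence dom v* = Q⁺ ∩ (A*)⁻¹(c* − P⁺) and v* is the indicator function of this set, and consequently v**(y) = sup{⟨y, y*⟩ : y* ∈ Q⁺, c* − A*y* ∈ P⁺} for every y ∈ Y. -/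
/-- The (Fenchel) conjugate of `f : Y → EReal` at `ys ∈ Y*`. -/
noncomputable def conjFn {Y : Type*} [NormedAddCommGroup Y] [NormedSpace ℝ Y]
    (f : Y → EReal) (ys : Y →L[ℝ] ℝ) : EReal :=
  ⨆ y : Y, ((ys y : ℝ) : EReal) - f y

/-- The biconjugate of `f : Y → EReal`. -/
noncomputable def biconjFn {Y : Type*} [NormedAddCommGroup Y] [NormedSpace ℝ Y]
    (f : Y → EReal) (y : Y) : EReal :=
  ⨆ ys : Y →L[ℝ] ℝ, ((ys y : ℝ) : EReal) - conjFn f ys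

open Classical

/-- For the value function `v(y) = inf {⟨x, c*⟩ : x ∈ P, y ∈ Ax − Q}` of a
conic linear program, the conjugate `v*` is the indicator function of the dual feasible
set `Q⁺ ∩ (A*)⁻¹(c* − P⁺)` (where `A* y* = y* ∘ A`), and consequently
`v**(y) = sup {⟨y, y*⟩ : y* ∈ Q⁺, c* − A* y* ∈ P⁺}`. -/
theorem stmt8 {X Y : Type*} [NormedAddCommGroup X] [NormedSpace ℝ X]
    [NormedAddCommGroup Y] [NormedSpace ℝ Y]
    (A : X →L[ℝ] Y) (P : ConvexCone ℝ X) (Q : ConvexCone ℝ Y)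
    (hPne : (P : Set X).Nonempty) (hQne : (Q : Set Y).Nonempty)
    (cstar : X →L[ℝ] ℝ)
    (v : Y → EReal)
    (hv : ∀ y : Y, v y =
      ⨅ (x : X) (_ : x ∈ P ∧ ∃ q ∈ Q, y = A x - q), ((cstar x : ℝ) : EReal)) :
    (∀ ys : Y →L[ℝ] ℝ, conjFn v ys =
      if (∀ q ∈ Q, 0 ≤ ys q) ∧ (∀ x ∈ P, 0 ≤ cstar x - ys (A x)) then (0 : EReal) else ⊤) ∧
    ({ys : Y →L[ℝ] ℝ | conjFn v ys < ⊤} =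
      {ys : Y →L[ℝ] ℝ | (∀ q ∈ Q, 0 ≤ ys q) ∧ (∀ x ∈ P, 0 ≤ cstar x - ys (A x))}) ∧
    (∀ y : Y, biconjFn v y =
      ⨆ (ys : Y →L[ℝ] ℝ)
        (_ : (∀ q ∈ Q, 0 ≤ ys q) ∧ (∀ x ∈ P, 0 ≤ cstar x - ys (A x))),
        ((ys y : ℝ) : EReal)) := by
  obtain ⟨x₀, hx₀⟩ := hPne
  obtain ⟨q₀, hq₀⟩ := hQne
  -- Key computation: the conjugate as a sup over the cone.
  have key : ∀ ys : Y →L[ℝ] ℝ, conjFn v ys =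
      ⨆ (x : X) (q : Y) (_ : x ∈ P ∧ q ∈ Q),
        ((ys (A x) - ys q - cstar x : ℝ) : EReal) := by
    intro ys
    set S := ⨆ (x : X) (q : Y) (_ : x ∈ P ∧ q ∈ Q),
        ((ys (A x) - ys q - cstar x : ℝ) : EReal) with hS
    have hterm : ∀ (x : X) (q : Y), x ∈ P → q ∈ Q →
        ((ys (A x) - ys q - cstar x : ℝ) : EReal) ≤ S := by
      intro x q hx hq
      calc ((ys (A x) - ys q - cstar x : ℝ) : EReal)
          ≤ ⨆ (_ : x ∈ P ∧ q ∈ Q), ((ys (A x) - ys q - cstar x : ℝ) : EReal) :=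
            le_iSup (fun _ => _) ⟨hx, hq⟩
        _ ≤ ⨆ (q : Y) (_ : x ∈ P ∧ q ∈ Q), ((ys (A x) - ys q - cstar x : ℝ) : EReal) :=
            le_iSup (fun q => ⨆ (_ : x ∈ P ∧ q ∈ Q), ((ys (A x) - ys q - cstar x : ℝ) : EReal)) q
        _ ≤ S := by
            rw [hS]
            exact le_iSup (fun x => ⨆ (q : Y) (_ : x ∈ P ∧ q ∈ Q),
              ((ys (A x) - ys q - cstar x : ℝ) : EReal)) x
    apply le_antisymm
    · apply iSup_le
      intro y
      by_contra h
      push_neg at h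
      obtain ⟨c, hc1, hc2⟩ := EReal.exists_between_coe_real h
      have hv' : v y < ((ys y - c : ℝ) : EReal) := by
        have h2 := hc2
        set w := v y with hw
        clear_value w
        induction w using EReal.rec with
        | bot => exact EReal.bot_lt_coe _
        | coe m =>
            rw [← EReal.coe_sub, EReal.coe_lt_coe_iff] at h2
            rw [EReal.coe_lt_coe_iff]
            linarith
        | top => simp [EReal.sub_top] at h2
      rw [hv y] at hv'
      rw [iInf_lt_iff] at hv'
      obtain ⟨x, hx⟩ := hv'
      rw [iInf_lt_iff] at hx
      obtain ⟨⟨hxP, q, hqQ, hy⟩, hlt⟩ := hx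
      rw [EReal.coe_lt_coe_iff] at hlt
      have hyy : ys y = ys (A x) - ys q := by rw [hy, map_sub]
      have : (c : EReal) < ((ys (A x) - ys q - cstar x : ℝ) : EReal) := by
        rw [EReal.coe_lt_coe_iff]; linarith
      exact absurd (lt_of_lt_of_le this (hterm x q hxP hqQ)) (not_lt.2 hc1.le)
    · refine iSup_le fun x => iSup_le fun q => iSup_le fun hxq => ?_
      obtain ⟨hx, hq⟩ := hxq
      have hvle : v (A x - q) ≤ ((cstar x : ℝ) : EReal) := by
        rw [hv]
        exact iInf_le_of_le x (iInf_le_of_le ⟨hx, ⟨q, hq, rfl⟩⟩ le_rfl)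
      calc ((ys (A x) - ys q - cstar x : ℝ) : EReal)
          = ((ys (A x - q) : ℝ) : EReal) - ((cstar x : ℝ) : EReal) := by
            rw [← EReal.coe_sub, map_sub]
        _ ≤ ((ys (A x - q) : ℝ) : EReal) - v (A x - q) :=
            EReal.sub_le_sub le_rfl hvle
        _ ≤ conjFn v ys := by
            rw [conjFn]
            exact le_iSup (fun y => ((ys y : ℝ) : EReal) - v y) (A x - q)
  -- Part 1
  have part1 : ∀ ys : Y →L[ℝ] ℝ, conjFn v ys =
      if (∀ q ∈ Q, 0 ≤ ys q) ∧ (∀ x ∈ P, 0 ≤ cstar x - ys (A x)) then (0 : EReal) else ⊤ := by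
    intro ys
    rw [key ys]
    set S := ⨆ (x : X) (q : Y) (_ : x ∈ P ∧ q ∈ Q),
        ((ys (A x) - ys q - cstar x : ℝ) : EReal) with hS
    have hterm : ∀ (x : X) (q : Y), x ∈ P → q ∈ Q →
        ((ys (A x) - ys q - cstar x : ℝ) : EReal) ≤ S := by
      intro x q hx hq
      calc ((ys (A x) - ys q - cstar x : ℝ) : EReal)
          ≤ ⨆ (_ : x ∈ P ∧ q ∈ Q), ((ys (A x) - ys q - cstar x : ℝ) : EReal) :=
            le_iSup (fun _ => _) ⟨hx, hq⟩
        _ ≤ ⨆ (q : Y) (_ : x ∈ P ∧ q ∈ Q), ((ys (A x) - ys q - cstar x : ℝ) : EReal) :=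
            le_iSup (fun q => ⨆ (_ : x ∈ P ∧ q ∈ Q), ((ys (A x) - ys q - cstar x : ℝ) : EReal)) q
        _ ≤ S := by
            rw [hS]
            exact le_iSup (fun x => ⨆ (q : Y) (_ : x ∈ P ∧ q ∈ Q),
              ((ys (A x) - ys q - cstar x : ℝ) : EReal)) x
    split_ifs with hcond
    · obtain ⟨hQpos, hPpos⟩ := hcond
      apply le_antisymm
      · refine iSup_le fun x => iSup_le fun q => iSup_le fun hxq => ?_
        obtain ⟨hx, hq⟩ := hxq
        have h1 := hQpos q hq
        have h2 := hPpos x hx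
        have : (ys (A x) - ys q - cstar x : ℝ) ≤ 0 := by linarith
        exact_mod_cast EReal.coe_le_coe_iff.2 this
      · by_contra h
        push_neg at h
        obtain ⟨c, hc1, hc2⟩ := EReal.exists_between_coe_real h
        have hc0 : c < 0 := by exact_mod_cast hc2
        set g₀ : ℝ := ys (A x₀) - ys q₀ - cstar x₀ with hg₀
        have hg₀le : g₀ ≤ 0 := by
          have h1 := hQpos q₀ hq₀
          have h2 := hPpos x₀ hx₀
          simp only [hg₀]; linarith
        rcases eq_or_lt_of_le hg₀le with hg0 | hgneg
        · -- g₀ = 0, so S ≥ 0 > c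
          have := hterm x₀ q₀ hx₀ hq₀
          rw [← hg₀, hg0] at this
          exact absurd (lt_of_lt_of_le (by exact_mod_cast hc0 : (c : EReal) < ((0:ℝ) : EReal)) this)
            (not_lt.2 hc1.le)
        · set t : ℝ := c / (2 * g₀) with ht
          clear_value t
          have ht0 : 0 < t := by
            rw [ht]; exact div_pos_of_neg_of_neg hc0 (by linarith)
          have hxP : t • x₀ ∈ P := P.smul_mem ht0 hx₀
          have hqQ : t • q₀ ∈ Q := Q.smul_mem ht0 hq₀
          have hval : ys (A (t • x₀)) - ys (t • q₀) - cstar (t • x₀) = t * g₀ := by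
            simp only [map_smul, smul_eq_mul, hg₀]; ring
          have hg₀ne : g₀ ≠ 0 := hgneg.ne
          have htg : t * g₀ = c / 2 := by
            rw [ht, div_mul_eq_mul_div]
            rw [mul_comm 2 g₀, ← div_div, mul_div_assoc, div_self hg₀ne, mul_one]
          have hcc : (c : EReal) < ((ys (A (t • x₀)) - ys (t • q₀) - cstar (t • x₀) : ℝ) : EReal) := by
            rw [hval, htg, EReal.coe_lt_coe_iff]; linarith
          exact absurd (lt_of_lt_of_le hcc (hterm _ _ hxP hqQ)) (not_lt.2 hc1.le)
    · rw [not_and_or] at hcond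
      by_contra hne
      have hlt : S < ⊤ := lt_of_le_of_ne le_top hne
      obtain ⟨c, hc1, _⟩ := EReal.exists_between_coe_real hlt
      rcases hcond with hq | hx
      · push_neg at hq
        obtain ⟨q', hq'Q, hq'neg⟩ := hq
        set b : ℝ := -ys q' with hb
        have hb0 : 0 < b := by simp only [hb]; linarith
        set a : ℝ := ys (A x₀) - cstar x₀ with ha
        set t : ℝ := max 1 ((c - a + 1) / b) with ht
        have ht0 : 0 < t := lt_of_lt_of_le one_pos (le_max_left _ _)
        have htb : c - a + 1 ≤ t * b := by
          rw [← div_le_iff₀ hb0]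
          exact le_max_right _ _
        have hqQ : t • q' ∈ Q := Q.smul_mem ht0 hq'Q
        have hval : ys (A x₀) - ys (t • q') - cstar x₀ = a + t * b := by
          simp only [map_smul, smul_eq_mul, ha, hb]; ring
        have hcc : (c : EReal) < ((ys (A x₀) - ys (t • q') - cstar x₀ : ℝ) : EReal) := by
          rw [hval, EReal.coe_lt_coe_iff]; linarith
        exact absurd (lt_of_lt_of_le hcc (hterm _ _ hx₀ hqQ)) (not_lt.2 hc1.le)
      · push_neg at hx
        obtain ⟨x', hx'P, hx'neg⟩ := hx
        set b : ℝ := ys (A x') - cstar x' with hb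
        have hb0 : 0 < b := by simp only [hb]; linarith
        set a : ℝ := -ys q₀ with ha
        set t : ℝ := max 1 ((c - a + 1) / b) with ht
        have ht0 : 0 < t := lt_of_lt_of_le one_pos (le_max_left _ _)
        have htb : c - a + 1 ≤ t * b := by
          rw [← div_le_iff₀ hb0]
          exact le_max_right _ _
        have hxP : t • x' ∈ P := P.smul_mem ht0 hx'P
        have hval : ys (A (t • x')) - ys q₀ - cstar (t • x') = a + t * b := by
          simp only [map_smul, smul_eq_mul, ha, hb]; ring
        have hcc : (c : EReal) < ((ys (A (t • x')) - ys q₀ - cstar (t • x') : ℝ) : EReal) := by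
          rw [hval, EReal.coe_lt_coe_iff]; linarith
        exact absurd (lt_of_lt_of_le hcc (hterm _ _ hxP hq₀)) (not_lt.2 hc1.le)
  refine ⟨part1, ?_, ?_⟩
  · ext ys
    simp only [Set.mem_setOf_eq, part1 ys]
    split_ifs with h
    · exact iff_of_true (by norm_num) h
    · exact iff_of_false (lt_irrefl _) h
  · intro y
    rw [biconjFn]
    refine iSup_congr fun ys => ?_
    rw [part1 ys]
    split_ifs with h
    · rw [iSup_pos h, sub_zero]
    · rw [iSup_neg h, EReal.sub_top]
end

section
/- Let X := ℝ², Y := ℝ³, A : X → Y with A(x₁, x₂) := (x₁, x₂, 0), c* := (0, 1) ∈ ℝ², P := ℝ × ℝ₊ ⊆ X, Q := {(y₁, y₂, y₃) ∈ Y : y₁ ≥ 0, y₃ ≥ 0, y₂² ≤ 2y₁y₃}, and let v : Y → ℝ ∪ {+∞} be defined by v(y) := inf{⟨x, c*⟩ : x ∈ P, Ax − y ∈ Q} (with inf ∅ := +∞). Then v(y) = y₂ if y ∈ ℝ × ℝ₊ × {0}, v(y) = 0 if y₃ < 0, and v(y) = +∞ otherwise; consequently dom v = (ℝ × ℝ₊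 × {0}) ∪ (ℝ × ℝ × (−∞, 0)), and v is not lower semicontinuous at any y = (y₁, y₂, 0) with y₂ > 0. -/
/-!
On the face `y₃ = 0` the cone condition `(x₂ - y₂)² ≤ 2 (x₁ - y₁) (-y₃)` forces `x₂ = y₂`, so the
program is feasible exactly when `y₂ ≥ 0` and its value is `y₂`. As soon as `y₃ < 0` the slack
`x₁ - y₁` can absorb any `x₂`, so `x = (y₁ + y₂² / (-2 y₃), 0)` is feasible with cost `0`. Hence `v`
jumps from `0` on the open half-space `y₃ < 0` up to `y₂ > 0` on its boundary.
-/

namespace Stmt10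

/-- The cone `P := ℝ × ℝ₊` in `X := ℝ²`. -/
def P : Set (ℝ × ℝ) := {x | 0 ≤ x.2}

/-- The cone `Q := {(y₁,y₂,y₃) : y₁ ≥ 0, y₃ ≥ 0, y₂² ≤ 2 y₁ y₃}` in `Y := ℝ³`. -/
def Q : Set (ℝ × ℝ × ℝ) := {y | 0 ≤ y.1 ∧ 0 ≤ y.2.2 ∧ y.2.1 ^ 2 ≤ 2 * y.1 * y.2.2}

/-- The linear operator `A(x₁,x₂) := (x₁,x₂,0)`. -/
def A (x : ℝ × ℝ) : ℝ × ℝ × ℝ := (x.1, x.2, 0)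

/-- The cost functional `c* := (0,1)`. -/
def cstar : ℝ × ℝ := (0, 1)

/-- The value function `v(y) := inf {⟨x, c*⟩ : x ∈ P, Ax − y ∈ Q}`. -/
noncomputable def v (y : ℝ × ℝ × ℝ) : EReal :=
  ⨅ (x : ℝ × ℝ) (_ : x ∈ P ∧ A x - y ∈ Q),
    ((x.1 * cstar.1 + x.2 * cstar.2 : ℝ) : EReal)

open Filter Topology

lemma _root_.LowerSemicontinuousAt.le_of_frequently {α β : Type*} [TopologicalSpace α]
    [LinearOrder β] {f : α → β} {a : α} {c : β} (hf : LowerSemicontinuousAt f a)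
    (h : ∃ᶠ x in 𝓝 a, f x ≤ c) : f a ≤ c := by
  by_contra! hc
  exact h ((hf c hc).mono fun _ => not_le.mpr)

lemma feasible_iff (x : ℝ × ℝ) (y : ℝ × ℝ × ℝ) :
    x ∈ P ∧ A x - y ∈ Q ↔
      0 ≤ x.2 ∧ y.1 ≤ x.1 ∧ y.2.2 ≤ 0 ∧ (x.2 - y.2.1) ^ 2 ≤ 2 * (x.1 - y.1) * -y.2.2 := by
  simp [P, Q, A, Prod.sub_def]

lemma v_le_of_feasible {x : ℝ × ℝ} {y : ℝ × ℝ × ℝ} (hx : x ∈ P ∧ A x - y ∈ Q) : v y ≤ x.2 := by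
  simpa [v, cstar] using iInf₂_le (f := fun x (_ : x ∈ P ∧ A x - y ∈ Q) =>
    ((x.1 * cstar.1 + x.2 * cstar.2 : ℝ) : EReal)) x hx

lemma le_v_of_forall_feasible {y : ℝ × ℝ × ℝ} {c : EReal}
    (h : ∀ x : ℝ × ℝ, x ∈ P ∧ A x - y ∈ Q → c ≤ x.2) : c ≤ v y :=
  le_iInf₂ fun x hx => by simpa [cstar] using h x hx

lemma snd_eq_of_feasible {x : ℝ × ℝ} {y : ℝ × ℝ × ℝ} (hx : x ∈ P ∧ A x - y ∈ Q)
    (hy : y.2.2 = 0) : x.2 = y.2.1 := by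
  obtain ⟨-, -, -, hsq⟩ := (feasible_iff x y).mp hx
  rw [hy, neg_zero, mul_zero] at hsq
  nlinarith [sq_nonneg (x.2 - y.2.1)]

lemma v_eq_of_nonneg_of_eq_zero {y : ℝ × ℝ × ℝ} (h₂ : 0 ≤ y.2.1) (h₃ : y.2.2 = 0) :
    v y = y.2.1 := by
  refine le_antisymm (v_le_of_feasible (x := (y.1, y.2.1)) ?_)
    (le_v_of_forall_feasible fun x hx => by rw [snd_eq_of_feasible hx h₃])
  rw [feasible_iff]
  simp [h₂, h₃]

lemma v_eq_zero_of_neg {y : ℝ × ℝ × ℝ} (h₃ : y.2.2 < 0) : v y = 0 := by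
  refine le_antisymm ?_ (le_v_of_forall_feasible fun x hx => ?_)
  · set s := -y.2.2 with hs
    have hs_pos : 0 < s := neg_pos.mpr h₃
    have hslack : 2 * (y.1 + y.2.1 ^ 2 / (2 * s) - y.1) * s = y.2.1 ^ 2 := by
      field_simp
      ring
    refine (v_le_of_feasible (x := (y.1 + y.2.1 ^ 2 / (2 * s), 0)) ?_).trans_eq rfl
    rw [feasible_iff]
    refine ⟨le_rfl, le_add_of_nonneg_right (by positivity), h₃.le, ?_⟩
    simp only [zero_sub, neg_sq, ← hs, hslack, le_rfl]
  · exact_mod_cast ((feasible_iff x y).mp hx).1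

lemma v_eq_top {y : ℝ × ℝ × ℝ} (h : ¬ (0 ≤ y.2.1 ∧ y.2.2 = 0)) (h₃ : ¬ y.2.2 < 0) :
    v y = ⊤ := by
  refine iInf₂_eq_top.mpr fun x hx => absurd ?_ h
  obtain ⟨hx₂, -, hy₃, -⟩ := (feasible_iff x y).mp hx
  have hy₃ : y.2.2 = 0 := le_antisymm hy₃ (not_lt.mp h₃)
  exact ⟨snd_eq_of_feasible hx hy₃ ▸ hx₂, hy₃⟩

lemma frequently_v_le_zero {y : ℝ × ℝ × ℝ} (h₃ : y.2.2 = 0) : ∃ᶠ y' in 𝓝 y, v y' ≤ 0 := by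
  have hpath : Tendsto (fun t : ℝ => (y.1, y.2.1, t)) (𝓝[<] 0) (𝓝 y) := by
    refine (Continuous.tendsto' (by fun_prop) 0 y ?_).mono_left nhdsWithin_le_nhds
    rw [← h₃]
  exact hpath.frequently (Eventually.frequently
    (eventually_mem_nhdsWithin.mono fun t ht => (v_eq_zero_of_neg (y := (y.1, y.2.1, t)) ht).le))

/-- a finite-dimensional conic linear program whose (proper) value
function `v` satisfies `v(y) = y₂` on `ℝ × ℝ₊ × {0}`, `v(y) = 0` when `y₃ < 0`, and
`v(y) = +∞` otherwise; hence `dom v = (ℝ × ℝ₊ × {0}) ∪ (ℝ × ℝ × (−∞,0))` and `v` is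
not lower semicontinuous at any `y = (y₁, y₂, 0)` with `y₂ > 0`. -/
theorem stmt10 :
    (∀ y : ℝ × ℝ × ℝ, 0 ≤ y.2.1 → y.2.2 = 0 → v y = ((y.2.1 : ℝ) : EReal)) ∧
    (∀ y : ℝ × ℝ × ℝ, y.2.2 < 0 → v y = 0) ∧
    (∀ y : ℝ × ℝ × ℝ, ¬ (0 ≤ y.2.1 ∧ y.2.2 = 0) → ¬ (y.2.2 < 0) → v y = ⊤) ∧
    ({y : ℝ × ℝ × ℝ | v y < ⊤} =
      {y : ℝ × ℝ × ℝ | (0 ≤ y.2.1 ∧ y.2.2 = 0) ∨ y.2.2 < 0}) ∧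
    (∀ y : ℝ × ℝ × ℝ, 0 < y.2.1 → y.2.2 = 0 → ¬ LowerSemicontinuousAt v y) := by
  refine ⟨fun y => v_eq_of_nonneg_of_eq_zero, fun y => v_eq_zero_of_neg,
    fun y => v_eq_top, ?_, fun y h₂ h₃ hlsc => ?_⟩
  · ext y
    by_cases hface : 0 ≤ y.2.1 ∧ y.2.2 = 0
    · simp [hface, v_eq_of_nonneg_of_eq_zero hface.1 hface.2]
    by_cases hneg : y.2.2 < 0
    · simp [hneg, v_eq_zero_of_neg hneg]
    · simp [hface, hneg, v_eq_top hface hneg]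
  · have hle := LowerSemicontinuousAt.le_of_frequently hlsc (frequently_v_le_zero h₃)
    rw [v_eq_of_nonneg_of_eq_zero h₂.le h₃] at hle
    exact h₂.not_ge (mod_cast hle)

end Stmt10
end

section
/- Let X be a separable infinite-dimensional real Hilbert space with orthonormal basis (eₙ)_{n≥1}, let ηₙ, μₙ ∈ (0,1) satisfy ηₙ² + μₙ² = 1 for all n ≥ 1 with (ηₙ) ∈ ℓ², set zₙ := ηₙ e_{2n−1} − μₙ e_{2n}, c* := Σ_{n≥1} ηₙ e_{2n}, P := {Σ_{n≥1} λₙ zₙ : (λₙ) ∈ ℓ², λₙ ≥ 0 for all n}, L := the closed linear span of {e_{2n−1} : n ≥ 1}, A := the orthogonal projection onto L (viewed as a map X → Y := X), and v(y) := inf{⟨x, c*⟩ : x ∈ P, Ax = y}. Then: dom v = {Σ_{n≥1} γₙ e_{2n−1} : (γₙ/ηₙ)_{n≥1} ∈ ℓ², γₙ ≥ 0 for all n}; for each y ∈ dom v the feasible set {x ∈ P : Ax = y} is a singleton; and for y = Σ_{n≥1} γₙ e_{2n−1} ∈ dom v one has v(y) = −Σ_{n≥1} μₙ γₙ ≤ 0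 = v(0). In particular, v is a proper sublinear function. -/
/-! The vectors `zₙ` are orthonormal and `A zₙ = ηₙ e_{2n-1}`, so `A (Σ λₙ zₙ) = Σ λₙ ηₙ e_{2n-1}`.
Since every `ηₙ ≠ 0`, `A` is injective on `P`, and `A '' P` is exactly the cone of the
`Σ γₙ e_{2n-1}` with `γ ≥ 0` and `γ / η ∈ ℓ²` (take `λ = γ / η`). Every feasible set is therefore
empty or a singleton `{x}`, and then `v y = ⟨x, c*⟩ = -Σ λₙ ηₙ μₙ = -Σ μₙ γₙ`. Sublinearity is
inherited from the data: `P` is a convex cone and `A` is linear and injective on it, so feasible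
points scale and add. -/

open Set Submodule
open scoped InnerProductSpace

section Orthonormal

variable {X ι : Type*} [NormedAddCommGroup X] [InnerProductSpace ℝ X]

theorem inner_eq_zero_of_hasSum {f : ι → X} {x w : X} (hx : HasSum f x)
    (h : ∀ i, ⟪w, f i⟫_ℝ = 0) : ⟪w, x⟫_ℝ = 0 :=
  (hx.mapL (innerSL ℝ w)).unique (by simp [h, hasSum_zero])

theorem Orthonormal.inner_left_eq_of_hasSum {e : ι → X} (he : Orthonormal ℝ e) {f : ι → ℝ}
    {x : X} (hx : HasSum (fun i => f i • e i) x) (k : ι) : ⟪e k, x⟫_ℝ = f k := by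
  classical
  have hterm : (fun i => ⟪e k, f i • e i⟫_ℝ) = fun i => if i = k then f k else 0 := by
    ext i
    by_cases hik : i = k <;>
      simp [real_inner_smul_right, he.1, orthonormal_iff_ite.mp he, hik, Ne.symm]
  exact (hx.mapL (innerSL ℝ (e k))).unique (hterm ▸ hasSum_ite_eq k (f k))

theorem Orthonormal.eq_of_hasSum_smul {e : ι → X} (he : Orthonormal ℝ e) {f g : ι → ℝ}
    {x : X} (hf : HasSum (fun i => f i • e i) x) (hg : HasSum (fun i => g i • e i) x) :
    f = g :=
  funext fun k => (he.inner_left_eq_of_hasSum hf k).symm.trans (he.inner_left_eq_of_hasSum hg k)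

theorem Orthonormal.summable_smul_of_summable_sq [CompleteSpace X] {e : ι → X}
    (he : Orthonormal ℝ e) {f : ι → ℝ} (hf : Summable fun i => f i ^ 2) :
    Summable fun i => f i • e i := by
  have := (he.orthogonalFamily.summable_iff_norm_sq_summable f).mpr
    (by simpa [Real.norm_eq_abs, sq_abs] using hf)
  simpa [LinearIsometry.toSpanSingleton_apply] using this

theorem Orthonormal.odd_mem_orthogonal_closure_span_even {e : ℕ → X} (he : Orthonormal ℝ e)
    (n : ℕ) : e (2 * n + 1) ∈ (span ℝ (range fun m => e (2 * m))).topologicalClosureᗮ := by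
  rw [orthogonal_closure]
  refine (isOrtho_span.mpr ?_).le (subset_span (mem_singleton (e (2 * n + 1))))
  rintro _ rfl _ ⟨m, rfl⟩
  exact he.inner_eq_zero (by omega)

theorem Orthonormal.smul_even_sub_smul_odd {e : ℕ → X} (he : Orthonormal ℝ e) {a c : ℕ → ℝ}
    (h : ∀ n, a n ^ 2 + c n ^ 2 = 1) :
    Orthonormal ℝ fun n => a n • e (2 * n) - c n • e (2 * n + 1) := by
  rw [orthonormal_iff_ite] at he ⊢
  intro n m
  have h_parity : ∀ n m : ℕ, 2 * n ≠ 2 * m + 1 := by omega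
  simp only [inner_sub_left, inner_sub_right, real_inner_smul_left, real_inner_smul_right, he]
  by_cases hnm : n = m
  · subst hnm
    simp only [if_true, if_neg (h_parity n n), if_neg (h_parity n n).symm]
    linear_combination h n
  · simp [hnm, h_parity, (h_parity _ _).symm]

end Orthonormal

section ValueFunction

variable {X Y : Type*} [NormedAddCommGroup X] [InnerProductSpace ℝ X]

noncomputable def valueFunction (P : Set X) (A : X → Y) (c : X) (y : Y) : EReal :=
  ⨅ (x : X) (_ : x ∈ P ∧ A x = y), ((⟪x, c⟫_ℝ : ℝ) : EReal)

variable {P : Set X} {A : X → Y} {c : X}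

theorem valueFunction_lt_top_iff {y : Y} : valueFunction P A c y < ⊤ ↔ ∃ x ∈ P, A x = y := by
  simp [valueFunction, iInf_lt_iff]

theorem valueFunction_eq_inner (hA : InjOn A P) {x : X} (hx : x ∈ P) :
    valueFunction P A c (A x) = ⟪x, c⟫_ℝ :=
  le_antisymm (iInf₂_le x ⟨hx, rfl⟩) <| le_iInf₂ fun x' ⟨hx', hAx'⟩ => by rw [hA hx' hx hAx']

theorem valueFunction_ne_bot (hA : InjOn A P) (y : Y) : valueFunction P A c y ≠ ⊥ := by
  by_cases hy : ∃ x ∈ P, A x = y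
  · obtain ⟨x, hx, rfl⟩ := hy
    simp [valueFunction_eq_inner hA hx]
  · rw [← valueFunction_lt_top_iff (c := c), not_lt_top_iff] at hy
    simp [hy]

variable [AddCommGroup Y] [Module ℝ Y] {F : Type*} [FunLike F X Y] [LinearMapClass F ℝ X Y]
  {A : F}

theorem valueFunction_smul (hP : ∀ t : ℝ, 0 < t → ∀ x ∈ P, t • x ∈ P) (hA : InjOn A P) {t : ℝ}
    (ht : 0 < t) (y : Y) : valueFunction P A c (t • y) = t * valueFunction P A c y := by
  by_cases hy : ∃ x ∈ P, A x = y
  · obtain ⟨x, hx, rfl⟩ := hy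
    rw [← map_smul, valueFunction_eq_inner hA hx, valueFunction_eq_inner hA (hP t ht x hx),
      real_inner_smul_left, EReal.coe_mul]
  · have hty : ¬∃ x ∈ P, A x = t • y := by
      rintro ⟨x, hx, hAx⟩
      refine hy ⟨t⁻¹ • x, hP _ (inv_pos.mpr ht) x hx, ?_⟩
      rw [map_smul, hAx, inv_smul_smul₀ ht.ne']
    rw [← valueFunction_lt_top_iff (c := c), not_lt_top_iff] at hy hty
    rw [hy, hty, EReal.coe_mul_top_of_pos ht]

theorem valueFunction_add (hP : ∀ x ∈ P, ∀ x' ∈ P, x + x' ∈ P) (hA : InjOn A P) {y y' : Y}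
    (hy : valueFunction P A c y < ⊤) (hy' : valueFunction P A c y' < ⊤) :
    valueFunction P A c (y + y') = valueFunction P A c y + valueFunction P A c y' := by
  obtain ⟨x, hx, rfl⟩ := valueFunction_lt_top_iff.mp hy
  obtain ⟨x', hx', rfl⟩ := valueFunction_lt_top_iff.mp hy'
  rw [← map_add, valueFunction_eq_inner hA hx, valueFunction_eq_inner hA hx',
    valueFunction_eq_inner hA (hP x hx x' hx'), inner_add_left, EReal.coe_add]

end ValueFunction

theorem Summable.sq_add {ι : Type*} {f g : ι → ℝ} (hf : Summable fun i => f i ^ 2)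
    (hg : Summable fun i => g i ^ 2) : Summable fun i => (f i + g i) ^ 2 :=
  .of_nonneg_of_le (fun i => sq_nonneg _) (fun i => by nlinarith [sq_nonneg (f i - g i)])
    ((hf.mul_left 2).add (hg.mul_left 2))

section NonnegL2Combinations

variable {X : Type*} [NormedAddCommGroup X] [InnerProductSpace ℝ X]

def nonnegL2Combinations (z : ℕ → X) : Set X :=
  {x | ∃ l : ℕ → ℝ, (∀ n, 0 ≤ l n) ∧ Summable (fun n => l n ^ 2) ∧
    HasSum (fun n => l n • z n) x}

variable {z : ℕ → X} {x x' : X}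

theorem add_mem_nonnegL2Combinations (hx : x ∈ nonnegL2Combinations z)
    (hx' : x' ∈ nonnegL2Combinations z) : x + x' ∈ nonnegL2Combinations z := by
  obtain ⟨l, hl0, hl2, hl⟩ := hx
  obtain ⟨l', hl0', hl2', hl'⟩ := hx'
  exact ⟨l + l', fun n => add_nonneg (hl0 n) (hl0' n), hl2.sq_add hl2',
    by simpa only [Pi.add_apply, add_smul] using hl.add hl'⟩

theorem smul_mem_nonnegL2Combinations {t : ℝ} (ht : 0 ≤ t) (hx : x ∈ nonnegL2Combinations z) :
    t • x ∈ nonnegL2Combinations z := by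
  obtain ⟨l, hl0, hl2, hl⟩ := hx
  exact ⟨fun n => t * l n, fun n => mul_nonneg ht (hl0 n),
    by simpa only [mul_pow] using hl2.mul_left (t ^ 2),
    by simpa only [smul_smul] using hl.const_smul t⟩

variable {e : ℕ → X} {η μ : ℕ → ℝ} {K : Submodule ℝ X} [K.HasOrthogonalProjection]

theorem hasSum_starProjection_of_hasSum (hK : ∀ n, e (2 * n) ∈ K) (hK' : ∀ n, e (2 * n + 1) ∈ Kᗮ)
    (hz : ∀ n, z n = η n • e (2 * n) - μ n • e (2 * n + 1)) {l : ℕ → ℝ}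
    (hx : HasSum (fun n => l n • z n) x) :
    HasSum (fun n => (l n * η n) • e (2 * n)) (K.starProjection x) := by
  have hKz : ∀ n, K.starProjection (z n) = η n • e (2 * n) := fun n => by
    rw [hz, map_sub, map_smul, map_smul, starProjection_eq_self_iff.mpr (hK n),
      (starProjection_apply_eq_zero_iff K).mpr (hK' n), smul_zero, sub_zero]
  simpa only [map_smul, hKz, smul_smul] using hx.mapL K.starProjection

theorem starProjection_injOn (he : Orthonormal ℝ e) (hη : ∀ n, η n ≠ 0)
    (hK : ∀ n, e (2 * n) ∈ K) (hK' : ∀ n, e (2 * n + 1) ∈ Kᗮ)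
    (hz : ∀ n, z n = η n • e (2 * n) - μ n • e (2 * n + 1)) :
    InjOn K.starProjection (nonnegL2Combinations z) := by
  rintro x ⟨l, -, -, hl⟩ x' ⟨l', -, -, hl'⟩ hxx'
  have hlη := (he.comp _ (mul_right_injective₀ two_ne_zero)).eq_of_hasSum_smul
    (hasSum_starProjection_of_hasSum hK hK' hz hl)
    (hxx' ▸ hasSum_starProjection_of_hasSum hK hK' hz hl')
  obtain rfl : l = l' := funext fun n => mul_right_cancel₀ (hη n) (congrFun hlη n)
  exact hl.unique hl'

theorem exists_mem_nonnegL2Combinations_starProjection_eq_iff [CompleteSpace X]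
    (he : Orthonormal ℝ e) (hη : ∀ n, 0 < η n) (hημ : ∀ n, η n ^ 2 + μ n ^ 2 = 1)
    (hK : ∀ n, e (2 * n) ∈ K) (hK' : ∀ n, e (2 * n + 1) ∈ Kᗮ)
    (hz : ∀ n, z n = η n • e (2 * n) - μ n • e (2 * n + 1)) {y : X} :
    (∃ x ∈ nonnegL2Combinations z, K.starProjection x = y) ↔
      ∃ γ : ℕ → ℝ, (∀ n, 0 ≤ γ n) ∧ Summable (fun n => (γ n / η n) ^ 2) ∧
        HasSum (fun n => γ n • e (2 * n)) y := by
  constructor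
  · rintro ⟨x, ⟨l, hl0, hl2, hl⟩, rfl⟩
    refine ⟨fun n => l n * η n, fun n => mul_nonneg (hl0 n) (hη n).le, ?_,
      hasSum_starProjection_of_hasSum hK hK' hz hl⟩
    simpa only [mul_div_cancel_right₀ _ (hη _).ne'] using hl2
  · rintro ⟨γ, hγ0, hγ2, hy⟩
    have hzo : Orthonormal ℝ z := funext hz ▸ he.smul_even_sub_smul_odd hημ
    obtain ⟨x, hx⟩ := hzo.summable_smul_of_summable_sq hγ2
    refine ⟨x, ⟨fun n => γ n / η n, fun n => div_nonneg (hγ0 n) (hη n).le, hγ2, hx⟩, ?_⟩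
    have hAx := hasSum_starProjection_of_hasSum hK hK' hz hx
    simp only [div_mul_cancel₀ _ (hη _).ne'] at hAx
    exact hAx.unique hy

theorem inner_eq_neg_mul_of_hasSum (he : Orthonormal ℝ e)
    (hz : ∀ n, z n = η n • e (2 * n) - μ n • e (2 * n + 1)) {c : X}
    (hc : HasSum (fun n => η n • e (2 * n + 1)) c) (n : ℕ) : ⟪z n, c⟫_ℝ = -(η n * μ n) := by
  have h_even : ⟪e (2 * n), c⟫_ℝ = 0 := inner_eq_zero_of_hasSum hc fun m => by
    rw [real_inner_smul_right, he.inner_eq_zero (by omega), mul_zero]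
  have h_odd : ⟪e (2 * n + 1), c⟫_ℝ = η n :=
    (he.comp _ fun m m' h => by omega).inner_left_eq_of_hasSum hc n
  rw [hz, inner_sub_left, real_inner_smul_left, real_inner_smul_left, h_even, h_odd]
  ring

theorem hasSum_mul_of_hasSum_starProjection (he : Orthonormal ℝ e)
    (hK : ∀ n, e (2 * n) ∈ K) (hK' : ∀ n, e (2 * n + 1) ∈ Kᗮ)
    (hz : ∀ n, z n = η n • e (2 * n) - μ n • e (2 * n + 1)) {c : X}
    (hc : HasSum (fun n => η n • e (2 * n + 1)) c) {l γ : ℕ → ℝ}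
    (hx : HasSum (fun n => l n • z n) x)
    (hy : HasSum (fun n => γ n • e (2 * n)) (K.starProjection x)) :
    HasSum (fun n => μ n * γ n) (-⟪x, c⟫_ℝ) := by
  obtain rfl : (fun n => l n * η n) = γ :=
    (he.comp _ (mul_right_injective₀ two_ne_zero)).eq_of_hasSum_smul
      (hasSum_starProjection_of_hasSum hK hK' hz hx) hy
  have hterm : (fun n => -(l n * ⟪c, z n⟫_ℝ)) = fun n => μ n * (l n * η n) := by
    funext n
    rw [real_inner_comm, inner_eq_neg_mul_of_hasSum he hz hc]
    ring
  have := (hx.mapL (innerSL ℝ c)).neg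
  simp only [innerSL_apply_apply, real_inner_smul_right] at this
  rwa [hterm, real_inner_comm] at this

theorem valueFunction_eq_neg_tsum [CompleteSpace X] (he : Orthonormal ℝ e) (hη : ∀ n, 0 < η n)
    (hημ : ∀ n, η n ^ 2 + μ n ^ 2 = 1) (hK : ∀ n, e (2 * n) ∈ K) (hK' : ∀ n, e (2 * n + 1) ∈ Kᗮ)
    (hz : ∀ n, z n = η n • e (2 * n) - μ n • e (2 * n + 1)) {c : X}
    (hc : HasSum (fun n => η n • e (2 * n + 1)) c) {γ : ℕ → ℝ} (hγ0 : ∀ n, 0 ≤ γ n)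
    (hγ2 : Summable fun n => (γ n / η n) ^ 2) {y : X} (hy : HasSum (fun n => γ n • e (2 * n)) y) :
    valueFunction (nonnegL2Combinations z) K.starProjection c y =
      ((-∑' n, μ n * γ n : ℝ) : EReal) := by
  obtain ⟨x, hx, rfl⟩ :=
    (exists_mem_nonnegL2Combinations_starProjection_eq_iff he hη hημ hK hK' hz).mpr
      ⟨γ, hγ0, hγ2, hy⟩
  obtain ⟨l, -, -, hl⟩ := id hx
  rw [valueFunction_eq_inner (starProjection_injOn he (fun n => (hη n).ne') hK hK' hz) hx,
    (hasSum_mul_of_hasSum_starProjection he hK hK' hz hc hl hy).tsum_eq, neg_neg]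

end NonnegL2Combinations

theorem stmt11_general {X : Type*} [NormedAddCommGroup X] [InnerProductSpace ℝ X]
    [CompleteSpace X]
    (b : HilbertBasis ℕ ℝ X)
    (η μ : ℕ → ℝ) (hη : ∀ n, η n ∈ Set.Ioo (0 : ℝ) 1) (hμ : ∀ n, μ n ∈ Set.Ioo (0 : ℝ) 1)
    (hημ : ∀ n, η n ^ 2 + μ n ^ 2 = 1)
    (z : ℕ → X) (hz : ∀ n, z n = η n • b (2 * n) - μ n • b (2 * n + 1))
    (cstar : X) (hc : HasSum (fun n => η n • b (2 * n + 1)) cstar)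
    (P : Set X)
    (hP : P = {x : X | ∃ l : ℕ → ℝ, (∀ n, 0 ≤ l n) ∧ Summable (fun n => l n ^ 2) ∧
      HasSum (fun n => l n • z n) x})
    (L : Submodule ℝ X)
    (hL : L = (Submodule.span ℝ (Set.range fun n => b (2 * n))).topologicalClosure)
    (A : X → X)
    (hA : ∀ x : X, A x ∈ L ∧ ∀ u ∈ L, (inner ℝ (x - A x) u : ℝ) = 0)
    (v : X → EReal)
    (hv : ∀ y : X, v y = ⨅ (x : X) (_ : x ∈ P ∧ A x = y), ((inner ℝ x cstar : ℝ) : EReal)) :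
    ({y : X | v y < ⊤} = {y : X | ∃ γ : ℕ → ℝ, (∀ n, 0 ≤ γ n) ∧
      Summable (fun n => (γ n / η n) ^ 2) ∧ HasSum (fun n => γ n • b (2 * n)) y}) ∧
    (∀ y : X, v y < ⊤ → ∃! x : X, x ∈ P ∧ A x = y) ∧
    (∀ γ : ℕ → ℝ, (∀ n, 0 ≤ γ n) → Summable (fun n => (γ n / η n) ^ 2) →
      ∀ y : X, HasSum (fun n => γ n • b (2 * n)) y →
        v y = ((-∑' n, μ n * γ n : ℝ) : EReal) ∧ v y ≤ 0) ∧
    v 0 = 0 ∧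
    ((∀ y : X, v y ≠ ⊥) ∧ (∃ y : X, v y ≠ ⊤)) ∧
    (∀ t : ℝ, 0 < t → ∀ y : X, v (t • y) = (t : EReal) * v y) ∧
    (∀ y y' : X, v y < ⊤ → v y' < ⊤ → v (y + y') ≤ v y + v y') := by
  have hηpos (n : ℕ) : 0 < η n := (hη n).1
  have : L.HasOrthogonalProjection := by subst hL; infer_instance
  have hK (n : ℕ) : b (2 * n) ∈ L := hL ▸ le_topologicalClosure _ (subset_span ⟨n, rfl⟩)
  have hK' (n : ℕ) : b (2 * n + 1) ∈ Lᗮ := hL ▸ b.orthonormal.odd_mem_orthogonal_closure_span_even n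
  obtain rfl : A = L.starProjection :=
    funext fun x => (eq_starProjection_of_mem_of_inner_eq_zero (hA x).1 (hA x).2).symm
  obtain rfl : P = nonnegL2Combinations z := hP
  obtain rfl : v = valueFunction (nonnegL2Combinations z) L.starProjection cstar := funext hv
  have hinj := starProjection_injOn b.orthonormal (fun n => (hηpos n).ne') hK hK' hz
  have hval := fun γ hγ0 hγ2 y hy =>
    valueFunction_eq_neg_tsum b.orthonormal hηpos hημ hK hK' hz hc (γ := γ) hγ0 hγ2 (y := y) hy
  have hzero : valueFunction (nonnegL2Combinations z) L.starProjection cstar 0 = 0 := by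
    simpa using hval 0 (fun _ => le_rfl) (by simp) 0 (by simp)
  refine ⟨?_, ?_, fun γ hγ0 hγ2 y hy => ⟨hval γ hγ0 hγ2 y hy, ?_⟩, hzero,
    ⟨valueFunction_ne_bot hinj, 0, by simp [hzero]⟩,
    fun t ht => valueFunction_smul (fun t ht x => smul_mem_nonnegL2Combinations ht.le) hinj ht,
    fun y y' hy hy' =>
      (valueFunction_add (fun x hx x' => add_mem_nonnegL2Combinations hx) hinj hy hy').le⟩
  · ext y
    exact valueFunction_lt_top_iff.trans
      (exists_mem_nonnegL2Combinations_starProjection_eq_iff b.orthonormal hηpos hημ hK hK' hz)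
  · intro y hy
    obtain ⟨x, hx, rfl⟩ := valueFunction_lt_top_iff.mp hy
    exact ⟨x, ⟨hx, rfl⟩, fun x' hx' => hinj hx'.1 hx hx'.2⟩
  · rw [hval γ hγ0 hγ2 y hy, EReal.coe_nonpos, neg_nonpos]
    exact tsum_nonneg fun n => mul_nonneg (hμ n).1.le (hγ0 n)

/-- In a separable infinite-dimensional real Hilbert space `X` with
orthonormal basis `(eₙ)` (here `b : HilbertBasis ℕ ℝ X`, with `b (2n)` playing the
role of `e_{2(n+1)−1}` and `b (2n+1)` that of `e_{2(n+1)}`), with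
`zₙ := ηₙ e_{2n−1} − μₙ e_{2n}`, `c* := Σ ηₙ e_{2n}`,
`P := {Σ λₙ zₙ : (λₙ) ∈ (ℓ²)₊}`, `L` the closed span of the odd-indexed vectors,
`A` the orthogonal projection onto `L`, and
`v(y) := inf {⟨x, c*⟩ : x ∈ P, Ax = y}`, one has:
`dom v = {Σ γₙ e_{2n−1} : (γₙ/ηₙ) ∈ (ℓ²)₊}`; each `y ∈ dom v` has a unique feasible
point; `v(Σ γₙ e_{2n−1}) = −Σ μₙ γₙ ≤ 0 = v 0`; and `v` is proper and sublinear. -/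
theorem stmt11 {X : Type*} [NormedAddCommGroup X] [InnerProductSpace ℝ X]
    [CompleteSpace X]
    (b : HilbertBasis ℕ ℝ X)
    (η μ : ℕ → ℝ) (hη : ∀ n, η n ∈ Set.Ioo (0 : ℝ) 1) (hμ : ∀ n, μ n ∈ Set.Ioo (0 : ℝ) 1)
    (hημ : ∀ n, η n ^ 2 + μ n ^ 2 = 1) (hη2 : Summable (fun n => η n ^ 2))
    (z : ℕ → X) (hz : ∀ n, z n = η n • b (2 * n) - μ n • b (2 * n + 1))
    (cstar : X) (hc : HasSum (fun n => η n • b (2 * n + 1)) cstar)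
    (P : Set X)
    (hP : P = {x : X | ∃ l : ℕ → ℝ, (∀ n, 0 ≤ l n) ∧ Summable (fun n => l n ^ 2) ∧
      HasSum (fun n => l n • z n) x})
    (L : Submodule ℝ X)
    (hL : L = (Submodule.span ℝ (Set.range fun n => b (2 * n))).topologicalClosure)
    (A : X → X)
    (hA : ∀ x : X, A x ∈ L ∧ ∀ u ∈ L, (inner ℝ (x - A x) u : ℝ) = 0)
    (v : X → EReal)
    (hv : ∀ y : X, v y = ⨅ (x : X) (_ : x ∈ P ∧ A x = y), ((inner ℝ x cstar : ℝ) : EReal)) :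
    ({y : X | v y < ⊤} = {y : X | ∃ γ : ℕ → ℝ, (∀ n, 0 ≤ γ n) ∧
      Summable (fun n => (γ n / η n) ^ 2) ∧ HasSum (fun n => γ n • b (2 * n)) y}) ∧
    (∀ y : X, v y < ⊤ → ∃! x : X, x ∈ P ∧ A x = y) ∧
    (∀ γ : ℕ → ℝ, (∀ n, 0 ≤ γ n) → Summable (fun n => (γ n / η n) ^ 2) →
      ∀ y : X, HasSum (fun n => γ n • b (2 * n)) y →
        v y = ((-∑' n, μ n * γ n : ℝ) : EReal) ∧ v y ≤ 0) ∧
    v 0 = 0 ∧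
    ((∀ y : X, v y ≠ ⊥) ∧ (∃ y : X, v y ≠ ⊤)) ∧
    (∀ t : ℝ, 0 < t → ∀ y : X, v (t • y) = (t : EReal) * v y) ∧
    (∀ y y' : X, v y < ⊤ → v y' < ⊤ → v (y + y') ≤ v y + v y') :=
  stmt11_general b η μ hη hμ hημ z hz cstar hc P hP L hL A hA v hv
end
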